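/- arXiv:1604.04087 — 4 statements merged into one kernel-verified Lean document; each statement's English description precedes it below -/
import Mathlib

section
/- Let r be a symmetric bilinear form on an n-dimensional inner product space (n ≥ 3) with trace s, let v be a nonzero vector with r(X,v) = α⟨X,v⟩ for all X, and suppose the tensor (n−2)D = dv∧r + (1/(n−1))i_v r∧g − (s/(n−1))dv∧g vanishes identically. Then for all X, Y orthogonal to v, r(X,Y) = ((s−α)/(n−1))·⟨X,Y⟩. In particular r has at most two eigenvalues: α with eigenvector v, and (s−α)/(n−1) on the orthogonal complement of v. -/
open scoped RealInnerProductSpace BigOperators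

/-- If `r` is a symmetric bilinear form on an `n`-dimensional inner product space
(`n ≥ 3`) with trace `s`, `v ≠ 0` is an eigenvector of `r` with eigenvalue `α`,
and the tensor `(n−2)D = dv∧r + (1/(n−1)) i_v r∧g − (s/(n−1)) dv∧g` vanishes
identically, then `r(X,Y) = ((s−α)/(n−1))⟨X,Y⟫` for all `X, Y ⊥ v`; in particular
`r` has at most two eigenvalues. -/
theorem stmt2 {V : Type*} [NormedAddCommGroup V] [InnerProductSpace ℝ V]
    (n : ℕ) (hn : 3 ≤ n) (b : OrthonormalBasis (Fin n) ℝ V)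
    (r : V →ₗ[ℝ] V →ₗ[ℝ] ℝ) (hsym : ∀ X Y : V, r X Y = r Y X)
    (s : ℝ) (hs : s = ∑ i, r (b i) (b i))
    (v : V) (hv : v ≠ 0) (α : ℝ) (heig : ∀ X : V, r X v = α * ⟪X, v⟫)
    (hD : ∀ X Y Z : V,
      ⟪v, X⟫ * r Y Z - ⟪v, Y⟫ * r X Z
      + (1 / ((n : ℝ) - 1)) * (r v X * ⟪Y, Z⟫ - r v Y * ⟪X, Z⟫)
      - (s / ((n : ℝ) - 1)) * (⟪v, X⟫ * ⟪Y, Z⟫ - ⟪v, Y⟫ * ⟪X, Z⟫) = 0) :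
    ∀ X Y : V, ⟪X, v⟫ = 0 → ⟪Y, v⟫ = 0 →
      r X Y = ((s - α) / ((n : ℝ) - 1)) * ⟪X, Y⟫ := by
  intro X Y hX hY
  have key := hD v X Y
  have hvX : ⟪v, X⟫ = 0 := by rw [real_inner_comm]; exact hX
  have hrvX : r v X = 0 := by rw [hsym, heig, hX, mul_zero]
  have hrvv : r v v = α * ⟪v, v⟫ := heig v
  have hvv : ⟪v, v⟫ ≠ 0 := by
    exact (inner_self_ne_zero (𝕜 := ℝ)).mpr hv
  have hn1 : ((n : ℝ) - 1) ≠ 0 := by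
    have : (3 : ℝ) ≤ (n : ℝ) := by exact_mod_cast hn
    linarith
  rw [hvX, hrvX, hrvv] at key
  have key2 : ⟪v, v⟫ * (r X Y + (α / ((n : ℝ) - 1)) * ⟪X, Y⟫
      - (s / ((n : ℝ) - 1)) * ⟪X, Y⟫) = 0 := by
    field_simp at key ⊢
    linarith [key]
  have := (mul_eq_zero.mp key2).resolve_left hvv
  field_simp at this ⊢
  linarith
end

section
/- Under the hypotheses of the previous statement (D = 0, r(v,·) = α⟨v,·⟩, v ≠ 0), the shape-operator-type tensor II(X,Y) := (λ·⟨X,Y⟩ − r(X,Y))/(h|v|) restricted to the orthogonal complement of v is proportional to the metric: II(X,Y) = (m/(n−1))⟨X,Y⟩ for X,Y ⊥ v, where m = tr_{v^⊥} II = ((n−1)λ + α − s)/(h|v|). -/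
open scoped RealInnerProductSpace BigOperators

/-- Under the hypotheses `D = 0`, `r(v,·) = α⟨v,·⟫`, `v ≠ 0`, the
shape-operator-type tensor `II(X,Y) = (λ⟨X,Y⟫ − r(X,Y))/(h|v|)` restricted to
`v^⊥` is proportional to the metric: `II(X,Y) = (m/(n−1))⟨X,Y⟫` for `X,Y ⊥ v`,
where `m = ((n−1)λ + α − s)/(h|v|)`. -/
theorem stmt3 {V : Type*} [NormedAddCommGroup V] [InnerProductSpace ℝ V]
    (n : ℕ) (hn : 3 ≤ n) (b : OrthonormalBasis (Fin n) ℝ V)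
    (r : V →ₗ[ℝ] V →ₗ[ℝ] ℝ) (hsym : ∀ X Y : V, r X Y = r Y X)
    (s : ℝ) (hs : s = ∑ i, r (b i) (b i))
    (v : V) (hv : v ≠ 0) (α lam h : ℝ) (hh : h ≠ 0)
    (heig : ∀ X : V, r X v = α * ⟪X, v⟫)
    (hD : ∀ X Y Z : V,
      ⟪v, X⟫ * r Y Z - ⟪v, Y⟫ * r X Z
      + (1 / ((n : ℝ) - 1)) * (r v X * ⟪Y, Z⟫ - r v Y * ⟪X, Z⟫)
      - (s / ((n : ℝ) - 1)) * (⟪v, X⟫ * ⟪Y, Z⟫ - ⟪v, Y⟫ * ⟪X, Z⟫) = 0)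
    (II : V → V → ℝ)
    (hII : ∀ X Y : V, II X Y = (lam * ⟪X, Y⟫ - r X Y) / (h * ‖v‖)) :
    ∀ X Y : V, ⟪X, v⟫ = 0 → ⟪Y, v⟫ = 0 →
      II X Y = ((((n : ℝ) - 1) * lam + α - s) / (h * ‖v‖)) / ((n : ℝ) - 1)
        * ⟪X, Y⟫ := by
  intro X Y hX hY
  have hn1 : ((n : ℝ) - 1) ≠ 0 := by
    have : (3 : ℝ) ≤ (n : ℝ) := by exact_mod_cast hn
    linarith
  have hvX : ⟪v, X⟫ = 0 := by rw [real_inner_comm]; exact hX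
  have hvY : ⟪v, Y⟫ = 0 := by rw [real_inner_comm]; exact hY
  have hrvX : r v X = 0 := by rw [hsym]; rw [heig, hX, mul_zero]
  have hrvv : r v v = α * ⟪v, v⟫ := heig v
  have hD' := hD v X Y
  rw [hvX, hvY, hrvX, hrvv] at hD'
  have hnv : ‖v‖ ≠ 0 := norm_ne_zero_iff.mpr hv
  have hvv : ⟪v, v⟫ ≠ 0 := by
    rw [real_inner_self_eq_norm_sq]
    exact pow_ne_zero _ hnv
  have hrXY : r X Y = (s - α) / ((n : ℝ) - 1) * ⟪X, Y⟫ := by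
    have h2 : ⟪v, v⟫ * (r X Y * ((n : ℝ) - 1) - (s - α) * ⟪X, Y⟫) = 0 := by
      field_simp at hD'
      linear_combination hD'
    rcases mul_eq_zero.mp h2 with h3 | h3
    · exact absurd h3 hvv
    · field_simp
      linarith
  rw [hII, hrXY]
  field_simp
  ring
end

section
/- Under the conditions D = H = 0, i_{∇u}r = α du, C(·,∇u,·)=0 on an h-almost gradient Ricci soliton, evaluating the vanishing divergence identity 0 = ((ns−(n−1)²λ−α)/((n−1)h))r − ∇_{∇u}r − (r∘r)/h + ((n−3)/(2(n−1)))du⊗ds + (1/(n−1))(⟨∇u,∇s⟩ − ⟨∇u,∇α⟩)g + ((s+(1−n)λ)/((n−1)h))(α−s)g + (1/(n−1))du⊗dα at (∇u, X) with X ⊥ ∇u yields (n−3)ds(X) + 2dα(X) = 0; hence (n−3)s + 2α is constant on each regular level set of u. -/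
open scoped RealInnerProductSpace

/-- Under the conditions `D = H = 0`, `i_{∇u}r = α du`, `C(·,∇u,·) = 0` on an
`h`-almost gradient Ricci soliton (`n ≥ 3`), evaluating the vanishing divergence
identity
`0 = ((ns−(n−1)²λ−α)/((n−1)h))r − ∇_{∇u}r − (r∘r)/h + ((n−3)/(2(n−1)))du⊗ds
 + (1/(n−1))(⟨∇u,∇s⟩−⟨∇u,∇α⟩)g + ((s+(1−n)λ)/((n−1)h))(α−s)g + (1/(n−1))du⊗dα`
at `(∇u, X)` with `X ⊥ ∇u` (using `∇_{∇u}r(X,∇u) = 0`, obtained by evaluating at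
`(X,∇u)`) yields `(n−3)ds(X) + 2dα(X) = 0`; hence `(n−3)s + 2α` is constant on
each regular level set of `u`. Pointwise model: `gu = ∇u ≠ 0`, `Dur = ∇_{∇u}r`,
`rr = r∘r`, `du(X) = ⟪gu,X⟫`. -/
theorem stmt12 {V : Type*} [NormedAddCommGroup V] [InnerProductSpace ℝ V]
    (n : ℕ) (hn : 3 ≤ n)
    (r Dur rr : V → V → ℝ) (gu : V) (hgu : gu ≠ 0)
    (ds dα : V → ℝ) (h lam α s dsu duα : ℝ) (hh : h ≠ 0)
    (hident : ∀ X Y : V, 0 =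
      (((n : ℝ) * s - ((n : ℝ) - 1) ^ 2 * lam - α) / (((n : ℝ) - 1) * h)) * r X Y
      - Dur X Y - rr X Y / h
      + (((n : ℝ) - 3) / (2 * ((n : ℝ) - 1))) * (⟪gu, X⟫ * ds Y)
      + (1 / ((n : ℝ) - 1)) * (dsu - duα) * ⟪X, Y⟫
      + ((s + (1 - (n : ℝ)) * lam) / (((n : ℝ) - 1) * h)) * (α - s) * ⟪X, Y⟫
      + (1 / ((n : ℝ) - 1)) * (⟪gu, X⟫ * dα Y))
    (hDursym : ∀ X Y : V, Dur X Y = Dur Y X)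
    (hrperp : ∀ X : V, ⟪X, gu⟫ = 0 → r X gu = 0 ∧ r gu X = 0)
    (hrrperp : ∀ X : V, ⟪X, gu⟫ = 0 → rr X gu = 0 ∧ rr gu X = 0) :
    ∀ X : V, ⟪X, gu⟫ = 0 → ((n : ℝ) - 3) * ds X + 2 * dα X = 0 := by
  intro X hX
  have hXg : ⟪gu, X⟫ = 0 := by rw [real_inner_comm]; exact hX
  have hn' : (2 : ℝ) ≤ (n : ℝ) - 1 := by
    have : (3 : ℝ) ≤ (n : ℝ) := by exact_mod_cast hn
    linarith
  have hm : ((n : ℝ) - 1) ≠ 0 := by linarith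
  have hc : (0 : ℝ) < ⟪gu, gu⟫ :=
    lt_of_le_of_ne real_inner_self_nonneg
      (fun hz => hgu ((inner_self_eq_zero (𝕜 := ℝ)).mp hz.symm))
  have h1 := hident X gu
  rw [(hrperp X hX).1, (hrrperp X hX).1, hXg, hX] at h1
  have hDur0 : Dur gu X = 0 := by
    rw [hDursym]
    simp at h1
    linarith
  have h2 := hident gu X
  rw [(hrperp X hX).2, (hrrperp X hX).2, hXg, hDur0] at h2
  simp at h2
  have h3 : (((n : ℝ) - 3) / (2 * ((n : ℝ) - 1))) * (⟪gu, gu⟫ * ds X)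
      + (1 / ((n : ℝ) - 1)) * (⟪gu, gu⟫ * dα X) = 0 := by linear_combination -h2 + ((((n : ℝ) - 3) / (2 * ((n : ℝ) - 1))) * ds X + (1 / ((n : ℝ) - 1)) * dα X) * real_inner_self_eq_norm_sq gu
  field_simp at h3
  have h4 : ⟪gu, gu⟫ * (((n : ℝ) - 1) * (((n : ℝ) - 3) * ds X + 2 * dα X)) = 0 := by
    linear_combination ((n : ℝ) - 1) * h3
  have h5 := (mul_eq_zero.mp h4).resolve_left (ne_of_gt hc)
  exact (mul_eq_zero.mp h5).resolve_left hm
end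

section
/- For the 3-tensor (n−2)D = du∧r + (1/(n−1))i_{∇u}r∧g − (s/(n−1))du∧g on a Riemannian n-manifold, contracting against the Ricci tensor gives |D|² = −(2/(n−2))·Σ_{i,k} D(Eᵢ, ∇u, E_k)·r(Eᵢ,E_k); consequently, on an h-almost gradient Ricci soliton (r + h·Hess u = λg), |D|² = (2h/(n−2))·Σᵢ D(Eᵢ, ∇u, Hess u(Eᵢ,·)^♯), using that Σᵢ D(Eᵢ, Eᵢ, ∇u)-type traces of D vanish. -/
open scoped RealInnerProductSpace BigOperators

lemma collapse_lin {V : Type*} [NormedAddCommGroup V] [InnerProductSpace ℝ V] {n : ℕ}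
    (e : OrthonormalBasis (Fin n) ℝ V) (f : V →ₗ[ℝ] ℝ) (x : V) :
    ∑ i, ⟪x, e i⟫ * f (e i) = f x := by
  conv_rhs => rw [← e.sum_repr x]
  rw [map_sum]
  refine Finset.sum_congr rfl fun i _ => ?_
  rw [map_smul, smul_eq_mul, e.repr_apply_apply, real_inner_comm]

/-- For the 3-tensor `(n−2)D = du∧r + (1/(n−1)) i_{∇u}r∧g − (s/(n−1)) du∧g` on
a Riemannian `n`-manifold (`n ≥ 3`, pointwise, `r` the Ricci tensor with trace
`s`, `gu = ∇u`), contracting against the Ricci tensor gives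
`|D|² = −(2/(n−2))·Σ_{i,k} D(Eᵢ,∇u,E_k)·r(Eᵢ,E_k)`; consequently, on an
`h`-almost gradient Ricci soliton (`r + h·Hess u = λg`),
`|D|² = (2h/(n−2))·Σ_{i,k} D(Eᵢ,∇u,E_k)·Hess u(Eᵢ,E_k)` (the contraction
`Σ_k Hu(Eᵢ,E_k) E_k` being `Hess u(Eᵢ,·)^♯`), using that the traces of `D`
vanish. -/
theorem stmt19 {V : Type*} [NormedAddCommGroup V] [InnerProductSpace ℝ V]
    (n : ℕ) (hn : 3 ≤ n) (e : OrthonormalBasis (Fin n) ℝ V)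
    (r Hu : V →ₗ[ℝ] V →ₗ[ℝ] ℝ) (hsym : ∀ X Y : V, r X Y = r Y X)
    (s : ℝ) (hs : s = ∑ i, r (e i) (e i))
    (gu : V) (h lam : ℝ) (hh : h ≠ 0)
    (hsol : ∀ X Y : V, r X Y + h * Hu X Y = lam * ⟪X, Y⟫)
    (D : V → V → V → ℝ)
    (hD : ∀ X Y Z : V, ((n : ℝ) - 2) * D X Y Z =
      ⟪gu, X⟫ * r Y Z - ⟪gu, Y⟫ * r X Z
      + (1 / ((n : ℝ) - 1)) * (r gu X * ⟪Y, Z⟫ - r gu Y * ⟪X, Z⟫)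
      - (s / ((n : ℝ) - 1)) * (⟪gu, X⟫ * ⟪Y, Z⟫ - ⟪gu, Y⟫ * ⟪X, Z⟫)) :
    (∑ i, ∑ j, ∑ k, (D (e i) (e j) (e k)) ^ 2)
      = -(2 / ((n : ℝ) - 2)) * ∑ i, ∑ k, D (e i) gu (e k) * r (e i) (e k)
    ∧ (∑ i, ∑ j, ∑ k, (D (e i) (e j) (e k)) ^ 2)
      = (2 * h / ((n : ℝ) - 2)) * ∑ i, ∑ k, D (e i) gu (e k) * Hu (e i) (e k) := by
  have hn3 : (3 : ℝ) ≤ (n : ℝ) := by exact_mod_cast hn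
  have hc : ((n : ℝ) - 2) ≠ 0 := by linarith
  have hc1 : ((n : ℝ) - 1) ≠ 0 := by linarith
  -- basic collapse identities
  have S_inner : ∀ x y : V, ∑ i, ⟪x, e i⟫ * ⟪y, e i⟫ = ⟪x, y⟫ := by
    intro x y
    simpa [real_inner_comm] using e.sum_inner_mul_inner x y
  have S_r1 : ∀ x Z : V, ∑ i, ⟪x, e i⟫ * r (e i) Z = r x Z := by
    intro x Z
    simpa using collapse_lin e (r.flip Z) x
  have S_r2 : ∀ x Z : V, ∑ i, ⟪x, e i⟫ * r Z (e i) = r Z x := fun x Z =>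
    collapse_lin e (r Z) x
  have S_n : ∑ i : Fin n, ⟪e i, e i⟫ = (n : ℝ) := by
    have h1 : ∀ i : Fin n, ⟪e i, e i⟫ = (1 : ℝ) := fun i => by
      rw [real_inner_self_eq_norm_mul_norm, e.orthonormal.1 i]; norm_num
    simp [h1]
  -- antisymmetry in the first two slots
  have hanti : ∀ X Y Z : V, D Y X Z = - D X Y Z := by
    intro X Y Z
    apply mul_left_cancel₀ hc
    rw [hD Y X Z, mul_neg, hD X Y Z]; ring
  -- collapse of D in each slot
  have DX : ∀ x Y Z : V, ∑ i, ⟪x, e i⟫ * D (e i) Y Z = D x Y Z := by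
    intro x Y Z
    apply mul_left_cancel₀ hc
    rw [hD x Y Z, Finset.mul_sum]
    have step : ∀ i : Fin n, ((n : ℝ) - 2) * (⟪x, e i⟫ * D (e i) Y Z)
        = (r Y Z - (s / ((n : ℝ) - 1)) * ⟪Y, Z⟫) * (⟪x, e i⟫ * ⟪gu, e i⟫)
        + (-(⟪gu, Y⟫)) * (⟪x, e i⟫ * r (e i) Z)
        + ((1 / ((n : ℝ) - 1)) * ⟪Y, Z⟫) * (⟪x, e i⟫ * r gu (e i))
        + (-(1 / ((n : ℝ) - 1)) * r gu Y + (s / ((n : ℝ) - 1)) * ⟪gu, Y⟫)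
            * (⟪x, e i⟫ * ⟪Z, e i⟫) := by
      intro i
      rw [mul_left_comm, hD, real_inner_comm (e i) Z]
      ring
    rw [Finset.sum_congr rfl fun i _ => step i]
    simp only [Finset.sum_add_distrib, ← Finset.mul_sum, S_inner, S_r1, S_r2]
    rw [real_inner_comm x gu]
    ring
  have DY : ∀ X x Z : V, ∑ j, ⟪x, e j⟫ * D X (e j) Z = D X x Z := by
    intro X x Z
    have step : ∀ j : Fin n, ⟪x, e j⟫ * D X (e j) Z = -(⟪x, e j⟫ * D (e j) X Z) := by
      intro j
      rw [hanti X (e j) Z]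
      ring
    rw [Finset.sum_congr rfl fun j _ => step j, Finset.sum_neg_distrib, DX x X Z,
      hanti X x Z, neg_neg]
  have DZ : ∀ X Y x : V, ∑ k, ⟪x, e k⟫ * D X Y (e k) = D X Y x := by
    intro X Y x
    apply mul_left_cancel₀ hc
    rw [hD X Y x, Finset.mul_sum]
    have step : ∀ k : Fin n, ((n : ℝ) - 2) * (⟪x, e k⟫ * D X Y (e k))
        = ⟪gu, X⟫ * (⟪x, e k⟫ * r Y (e k))
        + (-(⟪gu, Y⟫)) * (⟪x, e k⟫ * r X (e k))
        + ((1 / ((n : ℝ) - 1)) * r gu X - (s / ((n : ℝ) - 1)) * ⟪gu, X⟫)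
            * (⟪x, e k⟫ * ⟪Y, e k⟫)
        + (-(1 / ((n : ℝ) - 1)) * r gu Y + (s / ((n : ℝ) - 1)) * ⟪gu, Y⟫)
            * (⟪x, e k⟫ * ⟪X, e k⟫) := by
      intro k
      rw [mul_left_comm, hD]
      ring
    rw [Finset.sum_congr rfl fun k _ => step k]
    simp only [Finset.sum_add_distrib, ← Finset.mul_sum, S_inner, S_r2]
    rw [real_inner_comm x Y, real_inner_comm x X]
    ring
  -- trace-freeness
  have T2 : ∀ X : V, ∑ j, D X (e j) (e j) = 0 := by
    intro X
    apply mul_left_cancel₀ hc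
    rw [mul_zero, Finset.mul_sum]
    have step : ∀ j : Fin n, ((n : ℝ) - 2) * D X (e j) (e j)
        = ⟪gu, X⟫ * r (e j) (e j)
        + (-1 : ℝ) * (⟪gu, e j⟫ * r X (e j))
        + ((1 / ((n : ℝ) - 1)) * r gu X) * ⟪e j, e j⟫
        + (-(1 / ((n : ℝ) - 1))) * (⟪X, e j⟫ * r gu (e j))
        + (-(s / ((n : ℝ) - 1)) * ⟪gu, X⟫) * ⟪e j, e j⟫
        + (s / ((n : ℝ) - 1)) * (⟪gu, e j⟫ * ⟪X, e j⟫) := by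
      intro j
      rw [hD]
      ring
    rw [Finset.sum_congr rfl fun j _ => step j]
    simp only [Finset.sum_add_distrib, ← Finset.mul_sum, S_inner, S_r2, ← hs, S_n]
    rw [hsym X gu]
    field_simp
    ring
  have T1 : ∀ Y : V, ∑ i, D (e i) Y (e i) = 0 := by
    intro Y
    have step : ∀ i : Fin n, D (e i) Y (e i) = -(D Y (e i) (e i)) :=
      fun i => hanti Y (e i) (e i)
    rw [Finset.sum_congr rfl fun i _ => step i, Finset.sum_neg_distrib, T2, neg_zero]
  -- the six pieces of the contraction
  have P1 : ∑ i, ∑ j, ∑ k, r (e j) (e k) * (⟪gu, e i⟫ * D (e i) (e j) (e k))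
      = -(∑ i, ∑ k, D (e i) gu (e k) * r (e i) (e k)) := by
    rw [Finset.sum_comm]
    have inner : ∀ j : Fin n,
        ∑ i, ∑ k, r (e j) (e k) * (⟪gu, e i⟫ * D (e i) (e j) (e k))
        = ∑ k, r (e j) (e k) * D gu (e j) (e k) := by
      intro j
      rw [Finset.sum_comm]
      refine Finset.sum_congr rfl fun k _ => ?_
      rw [← Finset.mul_sum, DX]
    rw [Finset.sum_congr rfl fun j _ => inner j]
    have step : ∀ j k : Fin n, r (e j) (e k) * D gu (e j) (e k)
        = -(D (e j) gu (e k) * r (e j) (e k)) := by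
      intro j k
      rw [hanti (e j) gu (e k)]
      ring
    simp only [step, Finset.sum_neg_distrib]
  have P2 : ∑ i, ∑ j, ∑ k, (-(r (e i) (e k))) * (⟪gu, e j⟫ * D (e i) (e j) (e k))
      = -(∑ i, ∑ k, D (e i) gu (e k) * r (e i) (e k)) := by
    have inner : ∀ i : Fin n,
        ∑ j, ∑ k, (-(r (e i) (e k))) * (⟪gu, e j⟫ * D (e i) (e j) (e k))
        = ∑ k, -(D (e i) gu (e k) * r (e i) (e k)) := by
      intro i
      rw [Finset.sum_comm]
      refine Finset.sum_congr rfl fun k _ => ?_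
      rw [← Finset.mul_sum, DY]
      ring
    rw [Finset.sum_congr rfl fun i _ => inner i]
    simp only [Finset.sum_neg_distrib]
  have P3 : ∑ i, ∑ j, ∑ k,
      ((1 / ((n : ℝ) - 1)) * r gu (e i)) * (⟪e j, e k⟫ * D (e i) (e j) (e k)) = 0 := by
    have inner : ∀ i j : Fin n,
        ∑ k, ((1 / ((n : ℝ) - 1)) * r gu (e i)) * (⟪e j, e k⟫ * D (e i) (e j) (e k))
        = ((1 / ((n : ℝ) - 1)) * r gu (e i)) * D (e i) (e j) (e j) := by
      intro i j
      rw [← Finset.mul_sum, DZ]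
    rw [Finset.sum_congr rfl fun i _ => Finset.sum_congr rfl fun j _ => inner i j]
    simp only [← Finset.mul_sum, T2, mul_zero, Finset.sum_const_zero]
  have P4 : ∑ i, ∑ j, ∑ k,
      ((-(1 / ((n : ℝ) - 1))) * r gu (e j)) * (⟪e i, e k⟫ * D (e i) (e j) (e k)) = 0 := by
    have inner : ∀ i j : Fin n,
        ∑ k, ((-(1 / ((n : ℝ) - 1))) * r gu (e j)) * (⟪e i, e k⟫ * D (e i) (e j) (e k))
        = ((-(1 / ((n : ℝ) - 1))) * r gu (e j)) * D (e i) (e j) (e i) := by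
      intro i j
      rw [← Finset.mul_sum, DZ]
    rw [Finset.sum_congr rfl fun i _ => Finset.sum_congr rfl fun j _ => inner i j]
    rw [Finset.sum_comm]
    simp only [← Finset.mul_sum, T1, mul_zero, Finset.sum_const_zero]
  have P5 : ∑ i, ∑ j, ∑ k,
      ((-(s / ((n : ℝ) - 1))) * ⟪gu, e i⟫) * (⟪e j, e k⟫ * D (e i) (e j) (e k)) = 0 := by
    have inner : ∀ i j : Fin n,
        ∑ k, ((-(s / ((n : ℝ) - 1))) * ⟪gu, e i⟫) * (⟪e j, e k⟫ * D (e i) (e j) (e k))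
        = ((-(s / ((n : ℝ) - 1))) * ⟪gu, e i⟫) * D (e i) (e j) (e j) := by
      intro i j
      rw [← Finset.mul_sum, DZ]
    rw [Finset.sum_congr rfl fun i _ => Finset.sum_congr rfl fun j _ => inner i j]
    simp only [← Finset.mul_sum, T2, mul_zero, Finset.sum_const_zero]
  have P6 : ∑ i, ∑ j, ∑ k,
      ((s / ((n : ℝ) - 1)) * ⟪gu, e j⟫) * (⟪e i, e k⟫ * D (e i) (e j) (e k)) = 0 := by
    have inner : ∀ i j : Fin n,
        ∑ k, ((s / ((n : ℝ) - 1)) * ⟪gu, e j⟫) * (⟪e i, e k⟫ * D (e i) (e j) (e k))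
        = ((s / ((n : ℝ) - 1)) * ⟪gu, e j⟫) * D (e i) (e j) (e i) := by
      intro i j
      rw [← Finset.mul_sum, DZ]
    rw [Finset.sum_congr rfl fun i _ => Finset.sum_congr rfl fun j _ => inner i j]
    rw [Finset.sum_comm]
    simp only [← Finset.mul_sum, T1, mul_zero, Finset.sum_const_zero]
  -- the contraction identity
  have expand : ((n : ℝ) - 2) * (∑ i, ∑ j, ∑ k, (D (e i) (e j) (e k)) ^ 2)
      = (∑ i, ∑ j, ∑ k, r (e j) (e k) * (⟪gu, e i⟫ * D (e i) (e j) (e k)))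
      + (∑ i, ∑ j, ∑ k, (-(r (e i) (e k))) * (⟪gu, e j⟫ * D (e i) (e j) (e k)))
      + (∑ i, ∑ j, ∑ k,
          ((1 / ((n : ℝ) - 1)) * r gu (e i)) * (⟪e j, e k⟫ * D (e i) (e j) (e k)))
      + (∑ i, ∑ j, ∑ k,
          ((-(1 / ((n : ℝ) - 1))) * r gu (e j)) * (⟪e i, e k⟫ * D (e i) (e j) (e k)))
      + (∑ i, ∑ j, ∑ k,
          ((-(s / ((n : ℝ) - 1))) * ⟪gu, e i⟫) * (⟪e j, e k⟫ * D (e i) (e j) (e k)))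
      + (∑ i, ∑ j, ∑ k,
          ((s / ((n : ℝ) - 1)) * ⟪gu, e j⟫) * (⟪e i, e k⟫ * D (e i) (e j) (e k))) := by
    simp only [Finset.mul_sum]
    have step : ∀ i j k : Fin n, ((n : ℝ) - 2) * (D (e i) (e j) (e k)) ^ 2
        = r (e j) (e k) * (⟪gu, e i⟫ * D (e i) (e j) (e k))
        + (-(r (e i) (e k))) * (⟪gu, e j⟫ * D (e i) (e j) (e k))
        + ((1 / ((n : ℝ) - 1)) * r gu (e i)) * (⟪e j, e k⟫ * D (e i) (e j) (e k))
        + ((-(1 / ((n : ℝ) - 1))) * r gu (e j)) * (⟪e i, e k⟫ * D (e i) (e j) (e k))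
        + ((-(s / ((n : ℝ) - 1))) * ⟪gu, e i⟫) * (⟪e j, e k⟫ * D (e i) (e j) (e k))
        + ((s / ((n : ℝ) - 1)) * ⟪gu, e j⟫) * (⟪e i, e k⟫ * D (e i) (e j) (e k)) := by
      intro i j k
      rw [pow_two, ← mul_assoc, hD]
      ring
    rw [Finset.sum_congr rfl fun i _ => Finset.sum_congr rfl fun j _ =>
      Finset.sum_congr rfl fun k _ => step i j k]
    simp only [Finset.sum_add_distrib]
  have hcS : ((n : ℝ) - 2) * (∑ i, ∑ j, ∑ k, (D (e i) (e j) (e k)) ^ 2)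
      = -2 * (∑ i, ∑ k, D (e i) gu (e k) * r (e i) (e k)) := by
    rw [expand, P1, P2, P3, P4, P5, P6]
    ring
  have G1 : (∑ i, ∑ j, ∑ k, (D (e i) (e j) (e k)) ^ 2)
      = -(2 / ((n : ℝ) - 2)) * ∑ i, ∑ k, D (e i) gu (e k) * r (e i) (e k) := by
    field_simp
    linarith [hcS]
  -- soliton substitution
  have hr : ∀ X Y : V, r X Y = lam * ⟪X, Y⟫ - h * Hu X Y := fun X Y => by
    linarith [hsol X Y]
  have hRW : (∑ i, ∑ k, D (e i) gu (e k) * r (e i) (e k))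
      = -h * (∑ i, ∑ k, D (e i) gu (e k) * Hu (e i) (e k)) := by
    have step : ∀ i k : Fin n, D (e i) gu (e k) * r (e i) (e k)
        = lam * (⟪e i, e k⟫ * D (e i) gu (e k))
          + (-h) * (D (e i) gu (e k) * Hu (e i) (e k)) := by
      intro i k
      rw [hr]
      ring
    rw [Finset.sum_congr rfl fun i _ => Finset.sum_congr rfl fun k _ => step i k]
    simp only [Finset.sum_add_distrib, ← Finset.mul_sum]
    rw [Finset.sum_congr rfl fun i _ => DZ (e i) gu (e i), T1 gu]
    ring
  refine ⟨G1, ?_⟩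
  rw [G1, hRW]
  ring
end
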